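/- Let H, H', K be Hilbert spaces with H' a closed subspace of K, and let J : H' → K be the inclusion. Let X ∈ B(H, H') be compact, Y ∈ B(H, K) compact with P_{H'} Y = X (where P_{H'} is the orthogonal projection of K onto H'), and Z ∈ B(H, K) an arbitrary compact operator. Then for all positive integers k, ℓ with s_k(X) > 0 and s_k(Z) > 0: s_ℓ(X)/s_k(X) ≤ (1 + ‖Z − JX‖ / s_k(X)) · (s_ℓ(Z) + ‖Y − Z‖) / s_k(Z). -/

import Mathlib

/-- The `k`-th singular value (`k ≥ 1`, in decreasing order) of a bounded operator,
characterized via approximation numbers: `s_k(T) = inf {‖T − R‖ : rank R < k}`. -/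
noncomputable def singularValue {H K : Type*}
    [NormedAddCommGroup H] [InnerProductSpace ℂ H] [CompleteSpace H]
    [NormedAddCommGroup K] [InnerProductSpace ℂ K] [CompleteSpace K]
    (T : H →L[ℂ] K) (k : ℕ) : ℝ :=
  sInf {c : ℝ | ∃ R : H →L[ℂ] K, LinearMap.rank (R : H →ₗ[ℂ] K) < (k : Cardinal) ∧ c = ‖T - R‖}

/-!
Both sides are controlled by two properties of approximation numbers: they are
`1`-Lipschitz in the operator norm, and they do not increase under composition with
a contraction. Since `X = P_{H'} Y` and `J` is an isometry, this gives
`s_ℓ(X) ≤ s_ℓ(Y) ≤ s_ℓ(Z) + ‖Y - Z‖` and `s_k(Z) ≤ s_k(JX) + ‖Z - JX‖ ≤ s_k(X) + ‖Z - JX‖`,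
and the ratio bound is elementary algebra on these two inequalities.
-/

namespace singularValue

universe u v w

variable {H : Type u} {K : Type v} {K' : Type w}
    [NormedAddCommGroup H] [InnerProductSpace ℂ H] [CompleteSpace H]
    [NormedAddCommGroup K] [InnerProductSpace ℂ K] [CompleteSpace K]
    [NormedAddCommGroup K'] [InnerProductSpace ℂ K'] [CompleteSpace K']

theorem nonneg (T : H →L[ℂ] K) (k : ℕ) : 0 ≤ singularValue T k :=
  Real.sInf_nonneg fun _ ⟨_, _, hc⟩ => hc ▸ norm_nonneg _

-- No operator has rank `< 0`, so this is the junk value `sInf ∅ = 0`.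
@[simp]
theorem index_zero (T : H →L[ℂ] K) : singularValue T 0 = 0 := by
  simp [singularValue]

theorem le_norm_sub (T R : H →L[ℂ] K) {k : ℕ}
    (hR : LinearMap.rank (R : H →ₗ[ℂ] K) < (k : Cardinal)) :
    singularValue T k ≤ ‖T - R‖ :=
  csInf_le ⟨0, fun _ ⟨_, _, hc⟩ => hc ▸ norm_nonneg _⟩ ⟨R, hR, rfl⟩

theorem le_of_forall_le_norm_sub (T : H →L[ℂ] K) {k : ℕ} (hk : k ≠ 0) {c : ℝ}
    (h : ∀ R : H →L[ℂ] K, LinearMap.rank (R : H →ₗ[ℂ] K) < (k : Cardinal) → c ≤ ‖T - R‖) :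
    c ≤ singularValue T k := by
  refine le_csInf ⟨‖T - 0‖, 0, ?_, rfl⟩ fun _ ⟨R, hR, hc⟩ => hc ▸ h R hR
  simpa using Nat.pos_of_ne_zero hk

theorem le_add_norm_sub (S T : H →L[ℂ] K) (k : ℕ) :
    singularValue S k ≤ singularValue T k + ‖S - T‖ := by
  rcases eq_or_ne k 0 with rfl | hk
  · simp
  suffices singularValue S k - ‖S - T‖ ≤ singularValue T k by linarith
  refine le_of_forall_le_norm_sub T hk fun R hR => ?_
  calc singularValue S k - ‖S - T‖ ≤ ‖S - R‖ - ‖S - T‖ := by gcongr; exact le_norm_sub S R hR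
    _ ≤ ‖T - R‖ := by
      have := norm_sub_le_norm_sub_add_norm_sub S T R
      linarith [norm_sub_rev S T]

theorem comp_le_opNorm_mul (P : K →L[ℂ] K') (T : H →L[ℂ] K) (k : ℕ) :
    singularValue (P.comp T) k ≤ ‖P‖ * singularValue T k := by
  rcases eq_or_ne k 0 with rfl | hk
  · simp
  rw [← smul_eq_mul, singularValue.eq_1 T, ← Real.sInf_smul_of_nonneg (norm_nonneg P)]
  refine le_csInf (.smul_set ⟨‖T - 0‖, 0, by simpa using Nat.pos_of_ne_zero hk, rfl⟩) ?_
  rintro _ ⟨_, ⟨R, hR, rfl⟩, rfl⟩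
  have hPR : LinearMap.rank ((P.comp R : H →L[ℂ] K') : H →ₗ[ℂ] K') < (k : Cardinal) := by
    simpa using (LinearMap.lift_rank_comp_le_right (R : H →ₗ[ℂ] K) (P : K →ₗ[ℂ] K')).trans_lt
      (Cardinal.lift_strictMono.{_, w} hR)
  calc singularValue (P.comp T) k ≤ ‖P.comp T - P.comp R‖ := le_norm_sub _ _ hPR
    _ = ‖P.comp (T - R)‖ := by rw [ContinuousLinearMap.comp_sub]
    _ ≤ ‖P‖ * ‖T - R‖ := P.opNorm_comp_le _

theorem comp_le_of_norm_le_one {P : K →L[ℂ] K'} (hP : ‖P‖ ≤ 1) (T : H →L[ℂ] K) (k : ℕ) :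
    singularValue (P.comp T) k ≤ singularValue T k :=
  (comp_le_opNorm_mul P T k).trans <| mul_le_of_le_one_left (nonneg T k) hP

end singularValue

theorem singular_value_ratio_of_dilation_general
    {H K : Type*}
    [NormedAddCommGroup H] [InnerProductSpace ℂ H] [CompleteSpace H]
    [NormedAddCommGroup K] [InnerProductSpace ℂ K] [CompleteSpace K]
    (H' : Submodule ℂ K) [CompleteSpace H']
    (X : H →L[ℂ] H')
    (Y : H →L[ℂ] K)
    (hPY : H'.orthogonalProjectionOnto.comp Y = X)
    (Z : H →L[ℂ] K)
    (k l : ℕ)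
    (hskX : 0 < singularValue X k) (hskZ : 0 < singularValue Z k) :
    singularValue X l / singularValue X k ≤
      (1 + ‖Z - H'.subtypeL.comp X‖ / singularValue X k) *
        ((singularValue Z l + ‖Y - Z‖) / singularValue Z k) := by
  set f := ‖Z - H'.subtypeL.comp X‖
  have hXl : singularValue X l ≤ singularValue Z l + ‖Y - Z‖ := calc
    singularValue X l ≤ singularValue Y l :=
      hPY ▸ singularValue.comp_le_of_norm_le_one H'.orthogonalProjectionOnto_norm_le Y l
    _ ≤ singularValue Z l + ‖Y - Z‖ := singularValue.le_add_norm_sub Y Z l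
  have hZk : singularValue Z k ≤ singularValue X k + f := calc
    singularValue Z k ≤ singularValue (H'.subtypeL.comp X) k + f :=
      singularValue.le_add_norm_sub Z _ k
    _ ≤ singularValue X k + f := by
      gcongr; exact singularValue.comp_le_of_norm_le_one (Submodule.norm_subtypeL_le H') X k
  have hf : 0 ≤ f := norm_nonneg _
  have hcd : 0 ≤ singularValue Z l + ‖Y - Z‖ :=
    add_nonneg (singularValue.nonneg Z l) (norm_nonneg _)
  calc singularValue X l / singularValue X k
      ≤ (singularValue Z l + ‖Y - Z‖) / singularValue X k := by gcongr
    _ = (singularValue X k + f) / singularValue X k *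
          ((singularValue Z l + ‖Y - Z‖) / (singularValue X k + f)) := by
      field_simp
    _ ≤ (singularValue X k + f) / singularValue X k *
          ((singularValue Z l + ‖Y - Z‖) / singularValue Z k) := by gcongr
    _ = (1 + f / singularValue X k) * ((singularValue Z l + ‖Y - Z‖) / singularValue Z k) := by
      rw [add_div, div_self hskX.ne']

theorem singular_value_ratio_of_dilation
    {H K : Type*}
    [NormedAddCommGroup H] [InnerProductSpace ℂ H] [CompleteSpace H]
    [NormedAddCommGroup K] [InnerProductSpace ℂ K] [CompleteSpace K]
    (H' : Submodule ℂ K) [CompleteSpace H']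
    (X : H →L[ℂ] H') (hX : IsCompactOperator X)
    (Y : H →L[ℂ] K) (hY : IsCompactOperator Y)
    (hPY : H'.orthogonalProjectionOnto.comp Y = X)
    (Z : H →L[ℂ] K) (hZ : IsCompactOperator Z)
    (k l : ℕ) (hk : 1 ≤ k) (hl : 1 ≤ l)
    (hskX : 0 < singularValue X k) (hskZ : 0 < singularValue Z k) :
    singularValue X l / singularValue X k ≤
      (1 + ‖Z - H'.subtypeL.comp X‖ / singularValue X k) *
        ((singularValue Z l + ‖Y - Z‖) / singularValue Z k) :=
  singular_value_ratio_of_dilation_general H' X Y hPY Z k l hskX hskZ
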